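/- arXiv:2105.07770 — 2 statements merged into one kernel-verified Lean document; each statement's English description precedes it below -/
import Mathlib

section
/- (Prager–Synge identity in the H(curl) setting) Let Ω ⊆ ℝ³ be open, and let A, Aₕ, and σ be vector fields with curl A, curl Aₕ, curl σ ∈ L²(Ω)³. If (curl A, curl v)_{L²} = (curl σ, v)_{L²} for all admissible test fields v (i.e., A is the weak solution with right-hand side j = curl σ), then ‖curl(A − Aₕ)‖_{L²} ≤ ‖σ − curl Aₕ‖_{L²}. -/
open scoped RealInnerProductSpace

/-- **Prager–Synge identity in the `H(curl)` setting.**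
`H` plays the role of `L²(Ω)³`, `V ⊆ H` of the fields with square-integrable curl and
admissible boundary conditions, and `curl : V →ₗ H` of the curl operator. The integration
by parts `(curl u, v) = (u, curl v)` encodes the vanishing boundary terms. If `A` is the
weak solution with right-hand side `j = curl σ`, i.e. `(curl A, curl v) = (curl σ, v)` for
all test fields `v`, then for any `Aₕ`, `‖curl (A − Aₕ)‖ ≤ ‖σ − curl Aₕ‖`. -/
theorem prager_synge_curl {H : Type*} [NormedAddCommGroup H] [InnerProductSpace ℝ H]
    (V : Submodule ℝ H) (curl : V →ₗ[ℝ] H)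
    (hIBP : ∀ u v : V, ⟪curl u, (v : H)⟫ = ⟪(u : H), curl v⟫)
    (A Ah σ : V)
    (hweak : ∀ v : V, ⟪curl A, curl v⟫ = ⟪curl σ, (v : H)⟫) :
    ‖curl (A - Ah)‖ ≤ ‖(σ : H) - curl Ah‖ := by
  set e := A - Ah with he
  have key : ⟪curl e, curl e⟫ = ⟪(σ : H) - curl Ah, curl e⟫ := by
    have h1 : ⟪curl A, curl e⟫ = ⟪(σ : H), curl e⟫ := by
      rw [hweak e, hIBP σ e]
    have : curl e = curl A - curl Ah := by rw [he, map_sub]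
    rw [this] at h1 ⊢
    simp only [inner_sub_left, inner_sub_right] at h1 ⊢
    linarith [real_inner_comm ((curl : V →ₗ[ℝ] H) Ah) ((curl : V →ₗ[ℝ] H) A)]
  have hcs := abs_real_inner_le_norm ((σ : H) - curl Ah) (curl e)
  have h2 : ‖curl e‖ ^ 2 ≤ ‖(σ : H) - curl Ah‖ * ‖curl e‖ := by
    rw [← real_inner_self_eq_norm_sq, key]
    exact le_trans (le_abs_self _) hcs
  rcases eq_or_lt_of_le (norm_nonneg (curl e)) with h0 | h0
  · rw [← h0]; exact norm_nonneg _
  · nlinarith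
end

section
/- The second term in the Nédélec space definition can be characterized as homogeneous polynomials orthogonal to the position vector: a homogeneous polynomial vector field v of degree q+1 satisfies x · v(x) = 0 for all x if and only if v = x × w for some polynomial vector field w of degree q. -/
open MvPolynomial

/-- Cross product of polynomial vector fields on `ℝ³`. -/
noncomputable def pcross (u v : Fin 3 → MvPolynomial (Fin 3) ℝ) :
    Fin 3 → MvPolynomial (Fin 3) ℝ :=
  ![u 1 * v 2 - u 2 * v 1, u 2 * v 0 - u 0 * v 2, u 0 * v 1 - u 1 * v 0]

/-- The position vector field `x` on `ℝ³`. -/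
noncomputable def posX : Fin 3 → MvPolynomial (Fin 3) ℝ := fun i => X i

/-!
If `x · v = 0` identically, differentiating in `xₖ` gives `vₖ + ∑ᵢ xᵢ ∂ₖvᵢ = 0`, while Euler's
identity gives `∑ₖ xₖ ∂ₖvᵢ = (q + 1) vᵢ`. Since `(x × curl v)ᵢ = ∑ₖ xₖ ∂ᵢvₖ - ∑ₖ xₖ ∂ₖvᵢ`, this
yields `x × curl v = -(q + 2) v`, so `w = -(q + 2)⁻¹ curl v` works; its components have degree `q`
because those of `v` are homogeneous of degree `q + 1`.
-/

section

variable {R σ : Type*} [Fintype σ]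

lemma pderiv_sum_X_mul [CommSemiring R] (v : σ → MvPolynomial σ R) (k : σ) :
    pderiv k (∑ i, X i * v i) = v k + ∑ i, X i * pderiv k (v i) := by
  classical
  simp [pderiv_X, Finset.sum_add_distrib, Pi.single_apply, add_comm]

lemma forall_sum_mul_eval_eq_zero_iff [CommRing R] [IsDomain R] [Infinite R]
    (v : σ → MvPolynomial σ R) :
    (∀ x : σ → R, ∑ i, x i * eval x (v i) = 0) ↔ ∑ i, X i * v i = 0 := by
  have eval_sum (x : σ → R) : eval x (∑ i, X i * v i) = ∑ i, x i * eval x (v i) := by simp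
  refine ⟨fun h => MvPolynomial.funext fun x => ?_, fun h x => ?_⟩
  · rw [eval_sum, h, map_zero]
  · rw [← eval_sum, h, map_zero]

end

noncomputable def pcurl {R : Type*} [CommRing R] (v : Fin 3 → MvPolynomial (Fin 3) R) :
    Fin 3 → MvPolynomial (Fin 3) R :=
  ![pderiv 1 (v 2) - pderiv 2 (v 1), pderiv 2 (v 0) - pderiv 0 (v 2),
    pderiv 0 (v 1) - pderiv 1 (v 0)]

lemma totalDegree_pcurl_le {R : Type*} [CommRing R] {n : ℕ}
    {v : Fin 3 → MvPolynomial (Fin 3) R} (hv : ∀ i, (v i).IsHomogeneous (n + 1)) (i : Fin 3) :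
    (pcurl v i).totalDegree ≤ n := by
  have hderiv (k j : Fin 3) : (pderiv k (v j)).totalDegree ≤ n := (hv j).pderiv.totalDegree_le
  fin_cases i <;> exact (totalDegree_sub _ _).trans (max_le (hderiv _ _) (hderiv _ _))

lemma sum_mul_pcross_self (u w : Fin 3 → MvPolynomial (Fin 3) ℝ) :
    ∑ i, u i * pcross u w i = 0 := by
  simp only [pcross, Fin.sum_univ_three, Matrix.cons_val_zero, Matrix.cons_val_one,
    Matrix.cons_val_two, Matrix.head_cons, Matrix.tail_cons]
  ring

lemma pcross_smul_right (c : ℝ) (u w : Fin 3 → MvPolynomial (Fin 3) ℝ) :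
    pcross u (c • w) = c • pcross u w := by
  funext i
  fin_cases i <;> simp [pcross, smul_sub]

lemma pcross_posX_pcurl (v : Fin 3 → MvPolynomial (Fin 3) ℝ) (i : Fin 3) :
    pcross posX (pcurl v) i = ∑ k, X k * pderiv i (v k) - ∑ k, X k * pderiv k (v i) := by
  fin_cases i <;>
    simp only [pcross, pcurl, posX, Fin.sum_univ_three, Fin.zero_eta, Fin.mk_one, Fin.reduceFinMk,
      Matrix.cons_val_zero, Matrix.cons_val_one, Matrix.cons_val_two, Matrix.head_cons,
      Matrix.tail_cons] <;>
    ring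

lemma pcross_posX_pcurl_of_sum_X_mul_eq_zero {n : ℕ} {v : Fin 3 → MvPolynomial (Fin 3) ℝ}
    (hv : ∀ i, (v i).IsHomogeneous n) (horth : ∑ i, X i * v i = 0) :
    pcross posX (pcurl v) = (-(n + 1 : ℝ)) • v := by
  funext i
  have hgrad : ∑ k, X k * pderiv i (v k) = -v i := by
    rw [eq_neg_iff_add_eq_zero, add_comm, ← pderiv_sum_X_mul, horth, map_zero]
  have heuler : ∑ k, X k * pderiv k (v i) = (n : ℝ) • v i := by
    rw [(hv i).sum_X_mul_pderiv, Nat.cast_smul_eq_nsmul]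
  rw [pcross_posX_pcurl, hgrad, heuler, Pi.smul_apply]
  module

/-- A vector field `v` with homogeneous polynomial components of degree `q+1` satisfies
`x · v(x) = 0` for all `x ∈ ℝ³` if and only if `v = x × w` for some polynomial vector
field `w` of degree at most `q`. -/
theorem homogeneous_orth_iff_cross (q : ℕ) (v : Fin 3 → MvPolynomial (Fin 3) ℝ)
    (hv : ∀ i, (v i).IsHomogeneous (q + 1)) :
    (∀ x : Fin 3 → ℝ, ∑ i, x i * eval x (v i) = 0) ↔
      ∃ w : Fin 3 → MvPolynomial (Fin 3) ℝ,
        (∀ i, (w i).totalDegree ≤ q) ∧ ∀ i, v i = pcross posX w i := by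
  rw [forall_sum_mul_eval_eq_zero_iff]
  constructor
  · intro horth
    refine ⟨(-((q + 1 : ℕ) + 1 : ℝ))⁻¹ • pcurl v, fun i => ?_, fun i => ?_⟩
    · exact (totalDegree_smul_le _ _).trans (totalDegree_pcurl_le hv i)
    · have hne : (-((q + 1 : ℕ) + 1 : ℝ)) ≠ 0 := neg_ne_zero.mpr (by positivity)
      rw [pcross_smul_right, pcross_posX_pcurl_of_sum_X_mul_eq_zero hv horth, smul_smul,
        inv_mul_cancel₀ hne, one_smul]
  · rintro ⟨w, -, hw⟩
    rw [show v = pcross posX w from funext hw]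
    exact sum_mul_pcross_self posX w
end
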